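/- For all natural numbers m, n, k with m ≤ n + k, one has (as integers) C(m, n + k - m, k) = Σ_{i=0}^{n} (-1)^i · 2^{n-i} · binom(m, i) · binom(k + n - i, k). -/

import Mathlib

open Finset

/-- The set of ternary words of length `m + n` (as functions `Fin (m+n) → Fin 3`)
having exactly `k` letters equal to `2` and no letter equal to `0` among the
first `m` letters. -/
def ternaryWords (m n k : ℕ) : Finset (Fin (m + n) → Fin 3) :=
  univ.filter fun w =>
    (univ.filter fun i => w i = 2).card = k ∧ ∀ i : Fin (m + n), (i : ℕ) < m → w i ≠ 0

/-- `C m n k` is the number of ternary words of length `m + n` with exactly `k`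
twos and no zero among the first `m` letters; it equals the inset number
`{m,n choose k}` of Janjić–Petković. -/
def C (m n k : ℕ) : ℕ := (ternaryWords m n k).card

/-!
Marking every letter `2` by `X`, the generating polynomial of the words is
`(X + 1) ^ m * (X + 2) ^ N`: each of the first `m` positions holds `1` or `2`, each of the other
`N` any letter. Writing `X + 1 = (X + 2) - 1` and expanding binomially gives, for
`N = n + k - m`, the sum `∑ i, (-1) ^ i * m.choose i * (X + 2) ^ (n + k - i)`, whose `k`-th
coefficient is the alternating sum of the theorem.
-/

open scoped Polynomial
open Polynomial (X)

theorem Polynomial.coeff_prod_sum_X_pow {R ι α : Type*} [CommSemiring R] [Fintype ι]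
    [DecidableEq ι] (t : ι → Finset α) (d : α → ℕ) (k : ℕ) :
    (∏ i, ∑ a ∈ t i, (X : R[X]) ^ d a).coeff k =
      #{w ∈ Fintype.piFinset t | ∑ i, d (w i) = k} := by
  simp_rw [Finset.prod_univ_sum, prod_pow_eq_pow_sum, finsetSum_coeff, coeff_X_pow,
    eq_comm (a := k), sum_boole]

theorem ternaryWords_eq_filter_piFinset (m n k : ℕ) :
    ternaryWords m n k =
      {w ∈ Fintype.piFinset fun i : Fin (m + n) => ({a | (i : ℕ) < m → a ≠ 0} : Finset (Fin 3))
        | ∑ i, (if w i = 2 then 1 else 0) = k} := by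
  ext w
  simp [ternaryWords, sum_boole, and_comm]

theorem C_eq_coeff (m n k : ℕ) :
    (C m n k : ℤ) = ((X + 1) ^ m * (X + 2) ^ n : ℤ[X]).coeff k := by
  have h := Polynomial.coeff_prod_sum_X_pow (R := ℤ)
    (fun i : Fin (m + n) => ({a | (i : ℕ) < m → a ≠ 0} : Finset (Fin 3)))
    (fun a => if a = 2 then 1 else 0) k
  rw [C, ternaryWords_eq_filter_piFinset, ← h, Fin.prod_univ_add]
  congr 3
  · simp [Finset.sum_filter, Fin.sum_univ_three, add_comm]
  · simp [Fin.sum_univ_three]; ring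

theorem coeff_X_add_one_pow_mul_X_add_two_pow {m n : ℕ} (k : ℕ) (h : m ≤ n + k) :
    ((X + 1) ^ m * (X + 2) ^ (n + k - m) : ℤ[X]).coeff k =
      ∑ i ∈ range (n + 1), (-1 : ℤ) ^ i * 2 ^ (n - i) * m.choose i * (k + n - i).choose k := by
  set f : ℕ → ℤ := fun i => (-1 : ℤ) ^ i * 2 ^ (n - i) * m.choose i * (k + n - i).choose k
  have expand : ((X + 1) ^ m * (X + 2) ^ (n + k - m) : ℤ[X]) =
      ∑ i ∈ range (m + 1), Polynomial.C ((-1) ^ i * (m.choose i : ℤ)) *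
        (X + Polynomial.C 2) ^ (k + n - i) := by
    rw [show (X + 1 : ℤ[X]) = -1 + (X + 2) by ring, add_pow, sum_mul]
    refine sum_congr rfl fun i hi => ?_
    have : m - i + (n + k - m) = k + n - i := by simp at hi; omega
    rw [← this, pow_add]
    simp only [map_mul, map_pow, map_neg, map_one, map_natCast, map_ofNat]
    ring
  have vanish : ∀ i, min m n < i → f i = 0 := by
    intro i hi
    rcases lt_or_ge m i with hm | hm
    · simp [f, Nat.choose_eq_zero_of_lt hm]
    · simp [f, Nat.choose_eq_zero_of_lt (show k + n - i < k by omega)]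
  have truncate : ∀ N, min m n ≤ N → ∑ i ∈ range (N + 1), f i = ∑ i ∈ range (min m n + 1), f i :=
    fun N hN => (sum_subset (range_subset_range.2 (by omega))
      fun i _ hi => vanish i (by simp at hi; omega)).symm
  rw [truncate n (min_le_right m n), ← truncate m (min_le_left m n), expand,
    Polynomial.finsetSum_coeff]
  refine sum_congr rfl fun i _ => ?_
  rw [Polynomial.coeff_C_mul, Polynomial.coeff_X_add_C_pow,
    show k + n - i - k = n - i by omega]
  ring

theorem stmt_18 (m n k : ℕ) (h : m ≤ n + k) :
    (C m (n + k - m) k : ℤ) =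
      ∑ i ∈ Finset.range (n + 1),
        (-1 : ℤ) ^ i * 2 ^ (n - i) * m.choose i * (k + n - i).choose k := by
  rw [C_eq_coeff, coeff_X_add_one_pow_mul_X_add_two_pow k h]
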